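/- Under hypothesis (I), every solid of PG(4,q) (q even) containing the unique red point contains exactly q^2+q+1 black points. -/

import Mathlib

open Submodule Set

/-- Points of `PG(4,q)`: one-dimensional subspaces of `F^5`. -/
abbrev PGPoint (F : Type*) [Field F] := {W : Submodule F (Fin 5 → F) // Module.finrank F W = 1}
/-- Lines of `PG(4,q)`: two-dimensional subspaces of `F^5`. -/
abbrev PGLine (F : Type*) [Field F] := {W : Submodule F (Fin 5 → F) // Module.finrank F W = 2}
/-- Planes of `PG(4,q)`: three-dimensional subspaces of `F^5`. -/
abbrev PGPlane (F : Type*) [Field F] := {W : Submodule F (Fin 5 → F) // Module.finrank F W = 3}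
/-- Solids (hyperplanes) of `PG(4,q)`: four-dimensional subspaces of `F^5`. -/
abbrev PGSolid (F : Type*) [Field F] := {W : Submodule F (Fin 5 → F) // Module.finrank F W = 4}

variable {F : Type*} [Field F]

/-- The solids of `H` through the point `P`. -/
def solidsThrough (H : Set (PGSolid F)) (P : PGPoint F) : Set (PGSolid F) :=
  {S ∈ H | P.1 ≤ S.1}

/-- Hypothesis (I): every point lies on `0`, `q^3/2` or `(q^3+q^2)/2` solids of `H`. -/
def CondI (q : ℕ) (H : Set (PGSolid F)) : Prop :=
  ∀ P : PGPoint F,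
    (solidsThrough H P).ncard = 0 ∨
    2 * (solidsThrough H P).ncard = q ^ 3 ∨
    2 * (solidsThrough H P).ncard = q ^ 3 + q ^ 2

/-- A red point: lies on no solid of `H`. -/
def Red (H : Set (PGSolid F)) (P : PGPoint F) : Prop := (solidsThrough H P).ncard = 0

/-- A white point: lies on `q^3/2` solids of `H`. -/
def White (q : ℕ) (H : Set (PGSolid F)) (P : PGPoint F) : Prop :=
  2 * (solidsThrough H P).ncard = q ^ 3

/-- A black point: lies on `(q^3+q^2)/2` solids of `H`. -/
def Black (q : ℕ) (H : Set (PGSolid F)) (P : PGPoint F) : Prop :=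
  2 * (solidsThrough H P).ncard = q ^ 3 + q ^ 2

/-- The black points contained in a subspace `W`. -/
def blackIn (q : ℕ) (H : Set (PGSolid F)) (W : Submodule F (Fin 5 → F)) : Set (PGPoint F) :=
  {P : PGPoint F | Black q H P ∧ P.1 ≤ W}

/-!
Every solid of `H` misses the red point `R`, so it meets each line through `R` in exactly one
point. Summing the degrees (numbers of solids of `H` through a point) over such a line gives
`2|H| = q³w + (q³ + q²)b`, where `w` and `b` count the white and black points of the line; summing
them over a solid of `H` gives `2q³ + 2|H|(q² + q + 1) = q³(q³ + q² + q + 1) + q²B`, where `B`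
counts its black points. Comparing the two, `R` is the only red point of each line through it, all
these lines carry the same number `b` of black points, and every solid of `H` carries
`B = b(q² + q + 1) + q` of them. Counting the pairs (black point, solid of `H` through it) then
gives `(b - 1)(b(q² + q + 1) - q³) = 0`, hence `b = 1` because `q² + q + 1` does not divide `q³`.
A solid through `R` is the union of the `q² + q + 1` lines through `R` in it.
-/

open Module Finset
open scoped LinearAlgebra.Projectivization Classical

section Subspaces

variable {K V : Type*} [DivisionRing K] [AddCommGroup V] [Module K V] [FiniteDimensional K V]

theorem Submodule.finrank_sup_eq_two_of_ne {P Q : Submodule K V} (hP : finrank K P = 1)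
    (hQ : finrank K Q = 1) (hPQ : P ≠ Q) : finrank K ↥(P ⊔ Q) = 2 := by
  have hinf : finrank K ↥(P ⊓ Q) = 0 := by
    have hlt : P ⊓ Q < P := inf_le_left.lt_of_ne fun h =>
      hPQ (eq_of_le_of_finrank_eq (h ▸ inf_le_right) (by rw [hP, hQ]))
    have := finrank_lt_finrank_of_lt hlt
    omega
  have := finrank_sup_add_finrank_inf_eq P Q
  omega

theorem Submodule.finrank_inf_add_one_of_not_le {U S : Submodule K V}
    (hS : finrank K S + 1 = finrank K V) (hUS : ¬ U ≤ S) :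
    finrank K ↥(U ⊓ S) + 1 = finrank K U := by
  have hsup : finrank K ↥(U ⊔ S) = finrank K V := by
    have := finrank_lt_finrank_of_lt (le_sup_right.lt_of_ne fun h => hUS (le_sup_left.trans h.ge))
    have := (U ⊔ S).finrank_le
    omega
  have := finrank_sup_add_finrank_inf_eq U S
  omega

end Subspaces

section Counting

variable (K : Type*) {V : Type*} [Field K] [AddCommGroup V] [Module K V]

noncomputable def Submodule.finrankOneLeEquivProjectivization (W : Submodule K V) :
    {P : Submodule K V // P ≤ W ∧ finrank K P = 1} ≃ ℙ K W :=
  (Equiv.subtypeSubtypeEquivSubtypeInter (· ∈ Set.Iic W) (finrank K · = 1)).symm.trans <|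
    (Equiv.subtypeEquiv W.mapIic.toEquiv fun Q => by
      rw [← finrank_map_subtype_eq W Q]; rfl).symm.trans
    (Projectivization.equivSubmodule K W).symm

theorem Submodule.card_finrank_eq_one_le [Finite K] (W : Submodule K V) :
    Nat.card {P : Submodule K V // P ≤ W ∧ finrank K P = 1} =
      ∑ i ∈ range (finrank K W), Nat.card K ^ i := by
  rw [Nat.card_congr (W.finrankOneLeEquivProjectivization K),
    Projectivization.card_of_finrank K W rfl]

end Counting

section ProjectiveSpace

theorem PGSolid.finrank_add_one (S : PGSolid F) :
    finrank F S.1 + 1 = finrank F (Fin 5 → F) := by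
  rw [S.2, finrank_fin_fun]

variable [Fintype F]

local notation "q" => Fintype.card F

noncomputable def pointsIn (W : Submodule F (Fin 5 → F)) : Finset (PGPoint F) := {P | P.1 ≤ W}

noncomputable def linesThrough (R : PGPoint F) (W : Submodule F (Fin 5 → F)) : Finset (PGLine F) :=
  {L | R.1 ≤ L.1 ∧ L.1 ≤ W}

@[simp]
theorem mem_pointsIn {W : Submodule F (Fin 5 → F)} {P : PGPoint F} : P ∈ pointsIn W ↔ P.1 ≤ W := by
  simp [pointsIn]

@[simp]
theorem mem_linesThrough {R : PGPoint F} {W : Submodule F (Fin 5 → F)} {L : PGLine F} :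
    L ∈ linesThrough R W ↔ R.1 ≤ L.1 ∧ L.1 ≤ W := by
  simp [linesThrough]

theorem card_pointsIn (W : Submodule F (Fin 5 → F)) :
    #(pointsIn W) = ∑ i ∈ range (finrank F W), q ^ i := by
  rw [pointsIn, ← Fintype.card_subtype, ← Nat.card_eq_fintype_card,
    ← Nat.card_eq_fintype_card (α := F), ← W.card_finrank_eq_one_le F]
  exact Nat.card_congr ((Equiv.subtypeSubtypeEquivSubtypeInter
    (fun P : Submodule F (Fin 5 → F) => finrank F P = 1) (· ≤ W)).trans
    (Equiv.subtypeEquivRight fun _ => and_comm))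

theorem card_pointsIn_of_finrank_eq {W : Submodule F (Fin 5 → F)} {d : ℕ}
    (hW : finrank F W = d) : #(pointsIn W) = ∑ i ∈ range d, q ^ i :=
  hW ▸ card_pointsIn W

theorem card_pointsIn_line (L : PGLine F) : #(pointsIn L.1) = q + 1 := by
  simp [card_pointsIn_of_finrank_eq L.2, sum_range_succ, add_comm]

theorem card_pointsIn_solid (S : PGSolid F) : #(pointsIn S.1) = q ^ 3 + q ^ 2 + q + 1 := by
  simp [card_pointsIn_of_finrank_eq S.2, sum_range_succ]
  ring

theorem card_pointsIn_top : #(pointsIn (⊤ : Submodule F (Fin 5 → F))) =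
    q ^ 4 + q ^ 3 + q ^ 2 + q + 1 := by
  simp [card_pointsIn_of_finrank_eq (finrank_top F (Fin 5 → F)), sum_range_succ]
  ring

theorem card_filter_linesThrough_le {R P : PGPoint F} {W : Submodule F (Fin 5 → F)}
    (hRW : R.1 ≤ W) (hPW : P.1 ≤ W) (hRP : R ≠ P) :
    #{L ∈ linesThrough R W | P.1 ≤ L.1} = 1 := by
  have hRP' : R.1 ≠ P.1 := fun h => hRP (Subtype.ext h)
  rw [card_eq_one]
  refine ⟨⟨R.1 ⊔ P.1, finrank_sup_eq_two_of_ne R.2 P.2 hRP'⟩, ?_⟩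
  ext L
  simp only [mem_filter, mem_linesThrough, Finset.mem_singleton]
  constructor
  · rintro ⟨⟨hRL, -⟩, hPL⟩
    refine Subtype.ext (eq_of_le_of_finrank_eq (sup_le hRL hPL) ?_).symm
    rw [finrank_sup_eq_two_of_ne R.2 P.2 hRP', L.2]
  · rintro rfl
    exact ⟨⟨le_sup_left, sup_le hRW hPW⟩, le_sup_right⟩

theorem card_eq_sum_card_filter_linesThrough {R : PGPoint F} {W : Submodule F (Fin 5 → F)}
    (hRW : R.1 ≤ W) {A : Finset (PGPoint F)} (hAW : A ⊆ pointsIn W) (hRA : R ∉ A) :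
    #A = ∑ L ∈ linesThrough R W, #{P ∈ A | P.1 ≤ L.1} := by
  calc #A = ∑ P ∈ A, #{L ∈ linesThrough R W | P.1 ≤ L.1} := by
        rw [card_eq_sum_ones]
        refine sum_congr rfl fun P hP => ?_
        exact (card_filter_linesThrough_le hRW (mem_pointsIn.1 (hAW hP))
          (ne_of_mem_of_not_mem hP hRA).symm).symm
    _ = _ := sum_card_bipartiteAbove_eq_sum_card_bipartiteBelow _

theorem card_linesThrough_mul {R : PGPoint F} {W : Submodule F (Fin 5 → F)} (hRW : R.1 ≤ W) :
    #(linesThrough R W) * q = #(pointsIn W) - 1 := by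
  have hR : R ∈ pointsIn W := mem_pointsIn.2 hRW
  rw [← card_erase_of_mem hR, card_eq_sum_card_filter_linesThrough hRW (erase_subset R _)
    (notMem_erase R _), ← smul_eq_mul, ← sum_const]
  refine sum_congr rfl fun L hL => ?_
  obtain ⟨hRL, hLW⟩ := mem_linesThrough.1 hL
  have : {P ∈ (pointsIn W).erase R | P.1 ≤ L.1} = (pointsIn L.1).erase R := by
    ext P
    simp only [mem_filter, mem_erase, mem_pointsIn]
    exact ⟨fun h => ⟨h.1.1, h.2⟩, fun h => ⟨⟨h.1, h.2.trans hLW⟩, h.2⟩⟩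
  rw [this, card_erase_of_mem (mem_pointsIn.2 hRL), card_pointsIn_line, Nat.add_sub_cancel]

theorem card_filter_pointsIn_mul {R : PGPoint F} {W : Submodule F (Fin 5 → F)} (hRW : R.1 ≤ W)
    {p : PGPoint F → Prop} [DecidablePred p] (hpR : ¬ p R) {k : ℕ}
    (hk : ∀ L ∈ linesThrough R W, #{P ∈ pointsIn L.1 | p P} = k) :
    #{P ∈ pointsIn W | p P} * q = (#(pointsIn W) - 1) * k := by
  have hk' : ∀ L ∈ linesThrough R W, #{P ∈ {P ∈ pointsIn W | p P} | P.1 ≤ L.1} = k := by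
    intro L hL
    rw [filter_filter, ← hk L hL]
    congr 1
    ext P
    simp only [mem_filter, mem_pointsIn]
    exact ⟨fun h => ⟨h.2.2, h.2.1⟩, fun h => ⟨h.1.trans (mem_linesThrough.1 hL).2, h.2, h.1⟩⟩
  rw [card_eq_sum_card_filter_linesThrough hRW (filter_subset _ _)
    (fun h => hpR (mem_filter.1 h).2), sum_congr rfl hk', sum_const, smul_eq_mul,
    ← card_linesThrough_mul hRW]
  ring

end ProjectiveSpace

section Degrees

variable [Fintype F] (H : Set (PGSolid F))

local notation "q" => Fintype.card F

theorem ncard_solidsThrough (P : PGPoint F) :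
    (solidsThrough H P).ncard = #{S ∈ H.toFinset | P.1 ≤ S.1} := by
  rw [Set.ncard_eq_toFinset_card']
  congr 1
  ext S
  simp only [Set.mem_toFinset, mem_filter]
  rfl

theorem sum_ncard_solidsThrough (A : Finset (PGPoint F)) :
    ∑ P ∈ A, (solidsThrough H P).ncard = ∑ S ∈ H.toFinset, #{P ∈ A | P.1 ≤ S.1} := by
  simp_rw [ncard_solidsThrough]
  exact sum_card_bipartiteAbove_eq_sum_card_bipartiteBelow _

theorem filter_pointsIn_le (W U : Submodule F (Fin 5 → F)) :
    {P ∈ pointsIn W | P.1 ≤ U} = pointsIn (W ⊓ U) := by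
  ext P
  simp

theorem sum_ncard_solidsThrough_pointsIn (W : Submodule F (Fin 5 → F)) :
    ∑ P ∈ pointsIn W, (solidsThrough H P).ncard = ∑ S ∈ H.toFinset, #(pointsIn (W ⊓ S.1)) := by
  simp_rw [sum_ncard_solidsThrough, filter_pointsIn_le]

variable {H}

theorem not_le_of_red {R : PGPoint F} (hR : Red H R) {S : PGSolid F} (hS : S ∈ H) :
    ¬ R.1 ≤ S.1 := fun hRS => by
  rw [Red, Set.ncard_eq_zero] at hR
  exact hR.subset ⟨hS, hRS⟩

theorem sum_ncard_solidsThrough_line_of_red {R : PGPoint F} (hR : Red H R) {L : PGLine F}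
    (hRL : R.1 ≤ L.1) : ∑ P ∈ pointsIn L.1, (solidsThrough H P).ncard = H.ncard := by
  rw [sum_ncard_solidsThrough_pointsIn, Set.ncard_eq_toFinset_card', card_eq_sum_ones]
  refine sum_congr rfl fun S hS => ?_
  have := finrank_inf_add_one_of_not_le S.finrank_add_one
    fun hLS => not_le_of_red hR (Set.mem_toFinset.1 hS) (hRL.trans hLS)
  rw [L.2] at this
  simp [card_pointsIn_of_finrank_eq (show finrank F ↥(L.1 ⊓ S.1) = 1 by omega)]

theorem sum_ncard_solidsThrough_solid_of_mem {S₀ : PGSolid F} (hS₀ : S₀ ∈ H) :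
    ∑ P ∈ pointsIn S₀.1, (solidsThrough H P).ncard = q ^ 3 + H.ncard * (q ^ 2 + q + 1) := by
  have hS₀' : S₀ ∈ H.toFinset := Set.mem_toFinset.2 hS₀
  have hplane : ∀ S ∈ H.toFinset.erase S₀, #(pointsIn (S₀.1 ⊓ S.1)) = q ^ 2 + q + 1 := by
    intro S hS
    have hne : S₀.1 ≠ S.1 := fun h => (ne_of_mem_erase hS) (Subtype.ext h).symm
    have hnle : ¬ S₀.1 ≤ S.1 := fun h => hne (eq_of_le_of_finrank_eq h (by rw [S₀.2, S.2]))
    have := finrank_inf_add_one_of_not_le S.finrank_add_one hnle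
    rw [S₀.2] at this
    simp [card_pointsIn_of_finrank_eq (show finrank F ↥(S₀.1 ⊓ S.1) = 3 by omega),
      sum_range_succ]
    ring
  rw [sum_ncard_solidsThrough_pointsIn, ← add_sum_erase _ _ hS₀', inf_idem, sum_congr rfl hplane,
    sum_const, smul_eq_mul, card_pointsIn_solid, Set.ncard_eq_toFinset_card',
    ← card_erase_add_one hS₀']
  ring

end Degrees

section Colours

variable {q : ℕ} {H : Set (PGSolid F)}

theorem two_mul_ncard_solidsThrough (hq : 0 < q) (hI : CondI q H) (P : PGPoint F) :
    2 * (solidsThrough H P).ncard = q ^ 3 * (if White q H P then 1 else 0) +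
      (q ^ 3 + q ^ 2) * (if Black q H P then 1 else 0) := by
  have h3 : 0 < q ^ 3 := by positivity
  have h2 : 0 < q ^ 2 := by positivity
  rcases hI P with h | h | h <;> simp only [White, Black, h] <;> split_ifs <;> omega

theorem two_mul_sum_ncard_solidsThrough (hq : 0 < q) (hI : CondI q H) (A : Finset (PGPoint F)) :
    2 * ∑ P ∈ A, (solidsThrough H P).ncard =
      q ^ 3 * #{P ∈ A | White q H P} + (q ^ 3 + q ^ 2) * #{P ∈ A | Black q H P} := by
  simp_rw [mul_sum, two_mul_ncard_solidsThrough hq hI, sum_add_distrib, ← mul_sum, sum_boole,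
    Nat.cast_id]

theorem card_filter_white_add_card_filter_black (hq : 0 < q) (hI : CondI q H)
    (A : Finset (PGPoint F)) :
    #{P ∈ A | White q H P} + #{P ∈ A | Black q H P} = #{P ∈ A | ¬ Red H P} := by
  have hdisj : Disjoint {P ∈ A | White q H P} {P ∈ A | Black q H P} :=
    disjoint_filter.2 fun P _ hW hB => by
      rw [White] at hW
      rw [Black, hW] at hB
      have : q ^ 2 ≠ 0 := by positivity
      omega
  rw [← card_union_of_disjoint hdisj, ← filter_or]
  refine congrArg card (filter_congr fun P _ => ?_)
  have h3 : 0 < q ^ 3 := by positivity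
  rcases hI P with h | h | h <;> simp [White, Black, Red, h] <;> omega

theorem not_black_of_red (hq : 0 < q) {P : PGPoint F} (hP : Red H P) : ¬ Black q H P := by
  rw [Red] at hP
  rw [Black, hP]
  positivity

variable (q H) in
theorem two_mul_sum_card_black [Fintype F] :
    2 * ∑ S ∈ H.toFinset, #{P ∈ pointsIn S.1 | Black q H P} =
      (q ^ 3 + q ^ 2) * #{P ∈ pointsIn (⊤ : Submodule F (Fin 5 → F)) | Black q H P} := by
  have hS : ∀ S : PGSolid F, {P ∈ pointsIn S.1 | Black q H P} =
      {P ∈ {P ∈ pointsIn (⊤ : Submodule F (Fin 5 → F)) | Black q H P} | P.1 ≤ S.1} := fun S => by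
    ext P
    simp only [mem_filter, mem_pointsIn, le_top, true_and]
    exact and_comm
  simp_rw [hS]
  rw [← sum_ncard_solidsThrough, mul_sum, mul_comm]
  exact sum_const_nat fun P hP => (mem_filter.1 hP).2

theorem ncard_blackIn [Fintype F] (W : Submodule F (Fin 5 → F)) :
    (blackIn q H W).ncard = #{P ∈ pointsIn W | Black q H P} := by
  rw [Set.ncard_eq_toFinset_card']
  congr 1
  ext P
  simp only [Set.mem_toFinset, mem_filter, mem_pointsIn]
  exact and_comm

end Colours

theorem eq_one_of_sq_add_mul_eq {q b : ℕ} (hq : 0 < q)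
    (h : (q ^ 2 + b) * (b * (q ^ 2 + q + 1) + q) = (q + 1) * (q ^ 3 + q ^ 2 + q + 1) * b) :
    b = 1 := by
  have h' : ((q ^ 2 + b) * (b * (q ^ 2 + q + 1) + q) : ℤ) =
      (q + 1) * (q ^ 3 + q ^ 2 + q + 1) * b := by exact_mod_cast h
  have hfactor : ((b : ℤ) - 1) * (b * (q ^ 2 + q + 1) - q ^ 3) = 0 := by linear_combination h'
  rcases mul_eq_zero.1 hfactor with h1 | h1
  · omega
  · -- `q ^ 3 = (q - 1) (q ^ 2 + q + 1) + 1`, so `q ^ 2 + q + 1` would divide `1`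
    have hunit : ((b : ℤ) - q + 1) * (q ^ 2 + q + 1) = 1 := by linear_combination h1
    have hq' : (1 : ℤ) ≤ q := by exact_mod_cast hq
    rcases le_or_gt ((b : ℤ) - q + 1) 0 with hk | hk <;> nlinarith

section BlackPoints

variable [Fintype F] {H : Set (PGSolid F)}

local notation "q" => Fintype.card F

theorem two_mul_ncard_eq_of_line (hI : CondI q H) {R : PGPoint F} (hR : Red H R) {L : PGLine F}
    (hRL : R.1 ≤ L.1) :
    2 * H.ncard = q ^ 3 * #{P ∈ pointsIn L.1 | White q H P} +
      (q ^ 3 + q ^ 2) * #{P ∈ pointsIn L.1 | Black q H P} := by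
  rw [← sum_ncard_solidsThrough_line_of_red hR hRL]
  exact two_mul_sum_ncard_solidsThrough Fintype.card_pos hI _

theorem card_white_add_card_black_line_le (hI : CondI q H) {R : PGPoint F} (hR : Red H R)
    {L : PGLine F} (hRL : R.1 ≤ L.1) :
    #{P ∈ pointsIn L.1 | White q H P} + #{P ∈ pointsIn L.1 | Black q H P} ≤ q := by
  rw [card_filter_white_add_card_filter_black Fintype.card_pos hI]
  calc #{P ∈ pointsIn L.1 | ¬ Red H P} ≤ #((pointsIn L.1).erase R) :=
        card_le_card fun P hP => by
          rw [mem_filter] at hP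
          exact mem_erase.2 ⟨fun h => hP.2 (h ▸ hR), hP.1⟩
    _ = q := by rw [card_erase_of_mem (mem_pointsIn.2 hRL), card_pointsIn_line, Nat.add_sub_cancel]

theorem two_mul_ncard_eq_of_solid_mem (hI : CondI q H) {S : PGSolid F} (hS : S ∈ H) :
    2 * q ^ 3 + 2 * H.ncard * (q ^ 2 + q + 1) =
      q ^ 3 * (q ^ 3 + q ^ 2 + q + 1) + q ^ 2 * #{P ∈ pointsIn S.1 | Black q H P} := by
  have hsum := two_mul_sum_ncard_solidsThrough Fintype.card_pos hI (pointsIn S.1)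
  rw [sum_ncard_solidsThrough_solid_of_mem hS] at hsum
  have hcover := card_filter_white_add_card_filter_black Fintype.card_pos hI (pointsIn S.1)
  rw [filter_true_of_mem (p := (¬ Red H ·))
    fun P hP hPR => not_le_of_red hPR hS (mem_pointsIn.1 hP), card_pointsIn_solid] at hcover
  zify at hsum hcover ⊢
  linear_combination hsum + (q : ℤ) ^ 3 * hcover

theorem exists_le_pgLine (R : PGPoint F) : ∃ L : PGLine F, R.1 ≤ L.1 := by
  have hcard := card_linesThrough_mul (le_top : R.1 ≤ ⊤)
  rw [card_pointsIn_top] at hcard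
  obtain ⟨L, hL⟩ : (linesThrough R ⊤).Nonempty := by
    rw [← card_pos]
    have : 0 < q := Fintype.card_pos
    by_contra h0
    rw [Nat.eq_zero_of_not_pos h0] at hcard
    omega
  exact ⟨L, (mem_linesThrough.1 hL).1⟩

theorem two_mul_ncard_eq_sq_mul_of_line (hI : CondI q H) {S₀ : PGSolid F} (hS₀ : S₀ ∈ H)
    {R : PGPoint F} (hR : Red H R) {L : PGLine F} (hRL : R.1 ≤ L.1) :
    2 * H.ncard = q ^ 2 * (q ^ 2 + #{P ∈ pointsIn L.1 | Black q H P}) := by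
  have hq : 0 < q := Fintype.card_pos
  have hline := two_mul_ncard_eq_of_line hI hR hRL
  have hsolid := two_mul_ncard_eq_of_solid_mem hI hS₀
  have hwb := card_white_add_card_black_line_le hI hR hRL
  set w := #{P ∈ pointsIn L.1 | White q H P}
  set b := #{P ∈ pointsIn L.1 | Black q H P}
  -- a second red point on `L` would make `2 * H.ncard` too small for the equation of `S₀`
  have hfull : w + b = q := by
    by_contra hne
    have hlt : (q ^ 3 + q ^ 2) * (w + b + 1) ≤ (q ^ 3 + q ^ 2) * q :=
      Nat.mul_le_mul_left _ (by omega)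
    have hsmall : (2 * H.ncard + q ^ 2) * (q ^ 2 + q + 1) ≤ q ^ 4 * (q ^ 2 + q + 1) :=
      Nat.mul_le_mul_right _ (by nlinarith)
    nlinarith [pow_pos hq 4]
  rw [hline, ← hfull]
  ring

theorem exists_card_black_line (hI : CondI q H) (hne : H.Nonempty) {R : PGPoint F}
    (hR : Red H R) :
    ∃ b, 2 * H.ncard = q ^ 2 * (q ^ 2 + b) ∧
      ∀ L : PGLine F, R.1 ≤ L.1 → #{P ∈ pointsIn L.1 | Black q H P} = b := by
  obtain ⟨S₀, hS₀⟩ := hne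
  obtain ⟨L₀, hL₀⟩ := exists_le_pgLine R
  refine ⟨_, two_mul_ncard_eq_sq_mul_of_line hI hS₀ hR hL₀, fun L hL => ?_⟩
  have := (two_mul_ncard_eq_sq_mul_of_line hI hS₀ hR hL).symm.trans
    (two_mul_ncard_eq_sq_mul_of_line hI hS₀ hR hL₀)
  exact Nat.add_left_cancel (Nat.eq_of_mul_eq_mul_left (pow_pos (Fintype.card_pos (α := F)) 2) this)

theorem card_black_solid_of_mem (hI : CondI q H) {b : ℕ} (hH : 2 * H.ncard = q ^ 2 * (q ^ 2 + b))
    {S : PGSolid F} (hS : S ∈ H) :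
    #{P ∈ pointsIn S.1 | Black q H P} = b * (q ^ 2 + q + 1) + q := by
  have hsolid := two_mul_ncard_eq_of_solid_mem hI hS
  apply Nat.eq_of_mul_eq_mul_left (pow_pos (Fintype.card_pos (α := F)) 2)
  zify at hsolid hH ⊢
  linear_combination (q ^ 2 + q + 1 : ℤ) * hH - hsolid

theorem card_black_line_eq_one (hI : CondI q H) (hne : H.Nonempty) {R : PGPoint F}
    (hR : Red H R) {L : PGLine F} (hRL : R.1 ≤ L.1) :
    #{P ∈ pointsIn L.1 | Black q H P} = 1 := by
  have hq : 0 < q := Fintype.card_pos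
  obtain ⟨b, hH, hlines⟩ := exists_card_black_line hI hne hR
  have htotal : #{P ∈ pointsIn (⊤ : Submodule F (Fin 5 → F)) | Black q H P} =
      (q ^ 3 + q ^ 2 + q + 1) * b := by
    apply Nat.eq_of_mul_eq_mul_right hq
    rw [card_filter_pointsIn_mul le_top (not_black_of_red hq hR)
      fun L hL => hlines L (mem_linesThrough.1 hL).1, card_pointsIn_top, Nat.add_sub_cancel]
    ring
  have hdouble := two_mul_sum_card_black q H
  rw [sum_congr rfl fun S hS => card_black_solid_of_mem hI hH (Set.mem_toFinset.1 hS), sum_const,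
    smul_eq_mul, ← Set.ncard_eq_toFinset_card', htotal] at hdouble
  rw [hlines L hRL]
  refine eq_one_of_sq_add_mul_eq hq (Nat.eq_of_mul_eq_mul_left (pow_pos hq 2) ?_)
  calc q ^ 2 * ((q ^ 2 + b) * (b * (q ^ 2 + q + 1) + q))
      = 2 * (H.ncard * (b * (q ^ 2 + q + 1) + q)) := by rw [← mul_assoc, ← hH, mul_assoc]
    _ = q ^ 2 * ((q + 1) * (q ^ 3 + q ^ 2 + q + 1) * b) := by rw [hdouble]; ring

end BlackPoints

theorem stmt5_general (q : ℕ)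
    (F : Type*) [Field F] [Fintype F] (hcard : Fintype.card F = q)
    (H : Set (PGSolid F)) (hne : H.Nonempty) (hI : CondI q H)
    (R : PGPoint F) (hR : Red H R) :
    ∀ S : PGSolid F, R.1 ≤ S.1 → (blackIn q H S.1).ncard = q ^ 2 + q + 1 := by
  intro S hRS
  subst hcard
  have hq : 0 < Fintype.card F := Fintype.card_pos
  rw [ncard_blackIn]
  apply Nat.eq_of_mul_eq_mul_right hq
  rw [card_filter_pointsIn_mul hRS (not_black_of_red hq hR)
    fun L hL => card_black_line_eq_one hI hne hR (mem_linesThrough.1 hL).1, card_pointsIn_solid,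
    Nat.add_sub_cancel]
  ring

theorem stmt5 (q : ℕ) (hq : ∃ n : ℕ, 0 < n ∧ q = 2 ^ n)
    (F : Type*) [Field F] [Fintype F] (hcard : Fintype.card F = q)
    (H : Set (PGSolid F)) (hne : H.Nonempty) (hI : CondI q H)
    (R : PGPoint F) (hR : Red H R) :
    ∀ S : PGSolid F, R.1 ≤ S.1 → (blackIn q H S.1).ncard = q ^ 2 + q + 1 :=
  stmt5_general q F hcard H hne hI R hR
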